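/- arXiv:1904.04048 — 3 statements merged into one kernel-verified Lean document; each statement's English description precedes it below -/
import Mathlib

section
/- For the monomial μ(y) = (y₁/h)^{α₁} (y₂/h)^{α₂} with α₁, α₂ nonnegative even integers, the operator value A(0, τ)μ = (1/2π) ∫_{|z|<1} [μ(cτz) + cτ ∇μ(cτz)·z] / √(1-|z|²) dz equals (α₁-1)!!(α₂-1)!!/(α₁+α₂-1)!! · λ^{α₁+α₂}, where λ = cτ/h. -/
open MeasureTheory Real Nat

/-- The operator A(x,τ)f = (1/2π) ∫_{|z|<1} [f(x+cτz) + cτ ∇f(x+cτz)·z]/√(1-|z|²) dz. -/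
noncomputable def Aop (c τ : ℝ) (x : ℝ × ℝ) (f : ℝ × ℝ → ℝ) : ℝ :=
  (1 / (2 * Real.pi)) * ∫ z in {z : ℝ × ℝ | z.1 ^ 2 + z.2 ^ 2 < 1},
    (f (x.1 + c * τ * z.1, x.2 + c * τ * z.2) +
      c * τ * fderiv ℝ f (x.1 + c * τ * z.1, x.2 + c * τ * z.2) z) /
      Real.sqrt (1 - (z.1 ^ 2 + z.2 ^ 2))

/-!
The monomial μ is homogeneous of degree α₁ + α₂, so by Euler's identity the integrand of
A(0, τ)μ is (α₁ + α₂ + 1) λ^(α₁+α₂) z₁^α₁ z₂^α₂ / √(1 - |z|²). In polar coordinates the disk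
integral factors into a radial integral, which the substitution r = sin φ turns into the Wallis
integral ∫₀^(π/2) sin^(α₁+α₂+1), and the angular integral ∫ cos^α₁ sin^α₂ over a period, which
integration by parts reduces, two powers of sin at a time, to a Wallis integral of cos.
-/

open Set

theorem integral_cos_pow_two_mul (a : ℕ) :
    ∫ θ in (-π)..π, cos θ ^ (2 * a) = 2 * π * (2 * a - 1)‼ / (2 * a)‼ := by
  induction a with
  | zero => simp; ring
  | succ a ih =>
    rw [show 2 * (a + 1) = 2 * a + 2 by ring, integral_cos_pow, ih, sin_pi, sin_neg, sin_pi,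
      Nat.doubleFactorial_add_two, show 2 * a + 2 - 1 = 2 * a + 1 by omega,
      Nat.doubleFactorial_add_one]
    push_cast
    field_simp
    ring

theorem hasDerivAt_cos_pow_mul_sin_pow (a b : ℕ) (θ : ℝ) :
    HasDerivAt (fun θ => cos θ ^ (a + 1) * sin θ ^ (b + 1))
      ((b + 1) * (cos θ ^ (a + 2) * sin θ ^ b) - (a + 1) * (cos θ ^ a * sin θ ^ (b + 2))) θ := by
  refine (((hasDerivAt_cos θ).fun_pow (a + 1)).fun_mul
    ((hasDerivAt_sin θ).fun_pow (b + 1))).congr_deriv ?_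
  simp only [Nat.cast_add, Nat.cast_one, Nat.add_sub_cancel]
  ring

theorem integral_cos_pow_mul_sin_pow_add_two (a b : ℕ) :
    (a + 1) * ∫ θ in (-π)..π, cos θ ^ a * sin θ ^ (b + 2)
      = (b + 1) * ∫ θ in (-π)..π, cos θ ^ (a + 2) * sin θ ^ b := by
  have hFTC := intervalIntegral.integral_eq_sub_of_hasDerivAt (a := -π) (b := π)
    (fun θ _ => hasDerivAt_cos_pow_mul_sin_pow a b θ)
    (by apply Continuous.intervalIntegrable; fun_prop)
  rw [intervalIntegral.integral_sub, intervalIntegral.integral_const_mul,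
    intervalIntegral.integral_const_mul] at hFTC
  · simp only [sin_pi, sin_neg, neg_zero, zero_pow b.succ_ne_zero, mul_zero, sub_self] at hFTC
    linarith
  all_goals apply Continuous.intervalIntegrable; fun_prop

theorem integral_cos_pow_two_mul_mul_sin_pow_two_mul (a b : ℕ) :
    ∫ θ in (-π)..π, cos θ ^ (2 * a) * sin θ ^ (2 * b)
      = 2 * π * (2 * a - 1)‼ * (2 * b - 1)‼ / (2 * a + 2 * b)‼ := by
  induction b generalizing a with
  | zero => simpa [mul_div_right_comm] using integral_cos_pow_two_mul a
  | succ b ih =>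
    have hrec := integral_cos_pow_mul_sin_pow_add_two (2 * a) (2 * b)
    rw [show 2 * a + 2 = 2 * (a + 1) by ring, ih, show 2 * (a + 1) - 1 = 2 * a + 1 by omega,
      Nat.doubleFactorial_add_one, show 2 * (a + 1) + 2 * b = 2 * a + (2 * b + 2) by ring] at hrec
    rw [Nat.mul_add_one 2 b, show 2 * b + 2 - 1 = 2 * b + 1 by omega, Nat.doubleFactorial_add_one]
    refine mul_left_cancel₀ (show (2 * a + 1 : ℝ) ≠ 0 by positivity) ?_
    push_cast at hrec ⊢
    rw [hrec]
    ring

theorem integral_pow_div_sqrt_one_sub_sq_eq_integral_sin_pow (m : ℕ) :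
    ∫ r in (0 : ℝ)..1, r ^ m / √(1 - r ^ 2) = ∫ θ in (0 : ℝ)..(π / 2), sin θ ^ m := by
  have hsubst := intervalIntegral.integral_comp_mul_deriv_of_deriv_nonneg (a := 0) (b := 1)
    (g := fun θ => sin θ ^ m) continuous_arcsin.continuousOn
    (fun x hx => hasDerivAt_arcsin (by simp at hx; linarith) (by simp at hx; linarith))
    (fun x _ => by positivity)
  rw [arcsin_zero, arcsin_one] at hsubst
  rw [← hsubst]
  refine intervalIntegral.integral_congr fun r hr => ?_
  rw [uIcc_of_le zero_le_one] at hr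
  simp [sin_arcsin (by linarith [hr.1]) hr.2, div_eq_mul_inv]

theorem integral_sin_pow_two_mul_add_one (k : ℕ) :
    ∫ θ in (0 : ℝ)..(π / 2), sin θ ^ (2 * k + 1) = (2 * k)‼ / (2 * k + 1)‼ := by
  induction k with
  | zero => simp
  | succ k ih =>
    rw [show 2 * (k + 1) + 1 = 2 * k + 1 + 2 by ring, integral_sin_pow, ih, sin_zero,
      cos_pi_div_two, Nat.doubleFactorial_add_two, Nat.mul_add_one, Nat.doubleFactorial_add_two]
    push_cast
    field_simp
    ring

theorem natCast_mul_pow_sub_one_mul {R : Type*} [CommSemiring R] (m : ℕ) (x : R) :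
    m * x ^ (m - 1) * x = m * x ^ m := by
  cases m with
  | zero => simp
  | succ m => rw [Nat.add_sub_cancel, mul_assoc, ← pow_succ]

theorem hasDerivAt_div_pow (h : ℝ) (m : ℕ) (s : ℝ) :
    HasDerivAt (fun s => (s / h) ^ m) (m * (s / h) ^ (m - 1) / h) s := by
  simpa [div_eq_mul_inv, mul_assoc] using ((hasDerivAt_id s).div_const h).fun_pow m

theorem hasFDerivAt_div_pow_mul_div_pow (h : ℝ) (m n : ℕ) (p : ℝ × ℝ) :
    HasFDerivAt (fun y : ℝ × ℝ => (y.1 / h) ^ m * (y.2 / h) ^ n)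
      ((m * (p.1 / h) ^ (m - 1) / h * (p.2 / h) ^ n) • ContinuousLinearMap.fst ℝ ℝ ℝ +
        ((p.1 / h) ^ m * (n * (p.2 / h) ^ (n - 1) / h)) • ContinuousLinearMap.snd ℝ ℝ ℝ) p := by
  refine (((hasDerivAt_div_pow h m p.1).comp_hasFDerivAt p hasFDerivAt_fst).fun_mul
    ((hasDerivAt_div_pow h n p.2).comp_hasFDerivAt p hasFDerivAt_snd)).congr_fderiv ?_
  ext <;> simp [mul_comm]

theorem div_pow_mul_div_pow_add_mul_fderiv (h t : ℝ) (m n : ℕ) (z : ℝ × ℝ) :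
    (t * z.1 / h) ^ m * (t * z.2 / h) ^ n +
        t * fderiv ℝ (fun y : ℝ × ℝ => (y.1 / h) ^ m * (y.2 / h) ^ n) (t * z.1, t * z.2) z
      = (m + n + 1) * (t / h) ^ (m + n) * (z.1 ^ m * z.2 ^ n) := by
  rw [(hasFDerivAt_div_pow_mul_div_pow h m n _).fderiv]
  simp only [add_apply, smul_apply,
    ContinuousLinearMap.coe_fst', ContinuousLinearMap.coe_snd', smul_eq_mul]
  have hm := natCast_mul_pow_sub_one_mul m (t * z.1 / h)
  have hn := natCast_mul_pow_sub_one_mul n (t * z.2 / h)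
  linear_combination (t * z.2 / h) ^ n * hm + (t * z.1 / h) ^ m * hn

theorem smul_unitDisk_indicator_polarCoord_symm (m n : ℕ) {r : ℝ} (hr : 0 ≤ r) (θ : ℝ) :
    r • {z : ℝ × ℝ | z.1 ^ 2 + z.2 ^ 2 < 1}.indicator
        (fun z => z.1 ^ m * z.2 ^ n / √(1 - (z.1 ^ 2 + z.2 ^ 2))) (polarCoord.symm (r, θ))
      = (Iio 1).indicator (fun r => r ^ (m + n + 1) / √(1 - r ^ 2)) r *
          (cos θ ^ m * sin θ ^ n) := by
  have hnorm : (r * cos θ) ^ 2 + (r * sin θ) ^ 2 = r ^ 2 := by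
    linear_combination r ^ 2 * cos_sq_add_sin_sq θ
  simp only [polarCoord_symm_apply, indicator_apply, mem_ofPred_eq, mem_Iio, hnorm,
    pow_lt_one_iff_of_nonneg hr two_ne_zero, smul_eq_mul]
  split_ifs <;> ring

theorem integral_unitDisk_pow_mul_pow_div_sqrt (m n : ℕ) :
    ∫ z in {z : ℝ × ℝ | z.1 ^ 2 + z.2 ^ 2 < 1}, z.1 ^ m * z.2 ^ n / √(1 - (z.1 ^ 2 + z.2 ^ 2))
      = (∫ r in (0 : ℝ)..1, r ^ (m + n + 1) / √(1 - r ^ 2)) *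
          ∫ θ in (-π)..π, cos θ ^ m * sin θ ^ n := by
  have hdisk : MeasurableSet {z : ℝ × ℝ | z.1 ^ 2 + z.2 ^ 2 < 1} :=
    measurableSet_lt (by fun_prop) measurable_const
  rw [← integral_indicator hdisk, ← integral_comp_polarCoord_symm, polarCoord_target,
    setIntegral_congr_fun (measurableSet_Ioi.prod measurableSet_Ioo)
      fun p hp => smul_unitDisk_indicator_polarCoord_symm m n hp.1.le p.2,
    Measure.volume_eq_prod,
    setIntegral_prod_mul ((Iio 1).indicator _) (fun θ => cos θ ^ m * sin θ ^ n),
    setIntegral_indicator measurableSet_Iio, Ioi_inter_Iio,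
    intervalIntegral.integral_of_le zero_le_one,
    intervalIntegral.integral_of_le (by linarith [pi_pos]), integral_Ioc_eq_integral_Ioo,
    integral_Ioc_eq_integral_Ioo]

theorem integral_unitDisk_even_monomial_div_sqrt (a b : ℕ) :
    ∫ z in {z : ℝ × ℝ | z.1 ^ 2 + z.2 ^ 2 < 1},
        z.1 ^ (2 * a) * z.2 ^ (2 * b) / √(1 - (z.1 ^ 2 + z.2 ^ 2))
      = 2 * π * (2 * a - 1)‼ * (2 * b - 1)‼ / (2 * a + 2 * b + 1)‼ := by
  rw [integral_unitDisk_pow_mul_pow_div_sqrt, integral_pow_div_sqrt_one_sub_sq_eq_integral_sin_pow,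
    show 2 * a + 2 * b + 1 = 2 * (a + b) + 1 by ring, integral_sin_pow_two_mul_add_one,
    integral_cos_pow_two_mul_mul_sin_pow_two_mul, mul_add]
  field_simp

theorem Aop_monomial_even_general (c τ h : ℝ)
    (α₁ α₂ : ℕ) (h₁ : Even α₁) (h₂ : Even α₂) :
    Aop c τ (0, 0) (fun y => (y.1 / h) ^ α₁ * (y.2 / h) ^ α₂) =
      ((α₁ - 1)‼ * (α₂ - 1)‼ : ℝ) / ((α₁ + α₂ - 1)‼ : ℝ) * (c * τ / h) ^ (α₁ + α₂) := by
  obtain ⟨a, rfl⟩ := h₁.two_dvd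
  obtain ⟨b, rfl⟩ := h₂.two_dvd
  simp only [Aop, zero_add, div_pow_mul_div_pow_add_mul_fderiv]
  simp only [mul_div_assoc _ (_ ^ (2 * a) * _ ^ (2 * b)), integral_const_mul,
    integral_unitDisk_even_monomial_div_sqrt, Nat.doubleFactorial_add_one]
  push_cast
  field_simp

/-- A(0,τ)μ for μ(y) = (y₁/h)^α₁ (y₂/h)^α₂ with α₁,α₂ even equals
(α₁-1)!!(α₂-1)!!/(α₁+α₂-1)!! · λ^{α₁+α₂}, λ = cτ/h. -/
theorem Aop_monomial_even (c τ h : ℝ) (hc : 0 < c) (hτ : 0 < τ) (hh : 0 < h)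
    (α₁ α₂ : ℕ) (h₁ : Even α₁) (h₂ : Even α₂) :
    Aop c τ (0, 0) (fun y => (y.1 / h) ^ α₁ * (y.2 / h) ^ α₂) =
      ((α₁ - 1)‼ * (α₂ - 1)‼ : ℝ) / ((α₁ + α₂ - 1)‼ : ℝ) * (c * τ / h) ^ (α₁ + α₂) :=
  Aop_monomial_even_general c τ h α₁ α₂ h₁ h₂
end

section
/- For the Lagrange basis of the five/six-point stencil, A(x_{ij},τ)φ₀₀ = 1 - 2λ², A(x_{ij},τ)φ₋₁,₋₁ = 0, and A(x_{ij},τ)φ_{±1,0} = A(x_{ij},τ)φ_{0,±1} = λ²/2, where λ = cτ/h. -/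
/-! Every basis function is a quadratic polynomial `f`. Splitting `f` into homogeneous parts of
degree 0, 1, 2, Euler's identity turns `f (s z) + s ∇f (s z) · z` into the same parts scaled by
`1, 2s, 3s²`. In polar coordinates the weight `1 / √(1 - |z|²)` separates: the radial moments are
`∫₀¹ r / √(1 - r²) dr = 1` and `∫₀¹ r³ / √(1 - r²) dr = 2/3`, the linear and mixed angular terms
integrate to `0`, and `cos²`, `sin²` to `π`. Hence `A(0, τ) f = f 0 + (cτ)² (c₁₁ + c₂₂)` with
`c₁₁, c₂₂` the coefficients of `x₁², x₂²`, and the six values are read off the coefficients. -/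

open MeasureTheory

/-- The six Lagrange basis functions of the five/six-point stencil. -/
noncomputable def phi5 (h : ℝ) (q : ℤ × ℤ) (x : ℝ × ℝ) : ℝ :=
  if q = (0, 0) then 1 + x.1 * x.2 / h ^ 2 - x.1 ^ 2 / h ^ 2 - x.2 ^ 2 / h ^ 2
  else if q = (-1, 0) then -x.1 / (2 * h) - x.1 * x.2 / h ^ 2 + x.1 ^ 2 / (2 * h ^ 2)
  else if q = (0, -1) then -x.2 / (2 * h) - x.1 * x.2 / h ^ 2 + x.2 ^ 2 / (2 * h ^ 2)
  else if q = (-1, -1) then x.1 * x.2 / h ^ 2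
  else if q = (1, 0) then x.1 / (2 * h) + x.1 ^ 2 / (2 * h ^ 2)
  else if q = (0, 1) then x.2 / (2 * h) + x.2 ^ 2 / (2 * h ^ 2)
  else 0

open Real Set

theorem setIntegral_Ioo_eq_intervalIntegral {a b : ℝ} (hab : a ≤ b) (g : ℝ → ℝ) :
    ∫ x in Ioo a b, g x = ∫ x in a..b, g x := by
  rw [intervalIntegral.integral_of_le hab, integral_Ioc_eq_integral_Ioo]

theorem integrableOn_Ioo_and_integral_eq_sub_of_hasDerivAt_of_nonneg {f f' : ℝ → ℝ} {a b : ℝ}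
    (hab : a ≤ b) (hcont : ContinuousOn f (Icc a b))
    (hderiv : ∀ x ∈ Ioo a b, HasDerivAt f (f' x) x) (hnonneg : ∀ x ∈ Ioo a b, 0 ≤ f' x) :
    IntegrableOn f' (Ioo a b) ∧ ∫ x in Ioo a b, f' x = f b - f a := by
  have hint : IntegrableOn f' (Ioc a b) :=
    intervalIntegral.integrableOn_deriv_of_nonneg hcont hderiv hnonneg
  refine ⟨hint.mono_set Ioo_subset_Ioc_self, ?_⟩
  rw [setIntegral_Ioo_eq_intervalIntegral hab]
  exact intervalIntegral.integral_eq_sub_of_hasDerivAt_of_le hab hcont hderiv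
    ((intervalIntegrable_iff_integrableOn_Ioc_of_le hab).2 hint)

theorem integral_sum_mul_prod {α β ι 𝕜 : Type*} [RCLike 𝕜] [MeasurableSpace α]
    [MeasurableSpace β] {μ : Measure α} {ν : Measure β} [SFinite μ] [SFinite ν] (s : Finset ι)
    (f : ι → α → 𝕜) (g : ι → β → 𝕜) (hf : ∀ i ∈ s, Integrable (f i) μ)
    (hg : ∀ i ∈ s, Integrable (g i) ν) :
    ∫ p, ∑ i ∈ s, f i p.1 * g i p.2 ∂μ.prod ν = ∑ i ∈ s, (∫ x, f i x ∂μ) * ∫ y, g i y ∂ν := by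
  rw [integral_finsetSum s fun i hi => (hf i hi).mul_prod (hg i hi)]
  exact Finset.sum_congr rfl fun i _ => integral_prod_mul _ _

theorem sq_lt_one_of_mem_Ioo {r : ℝ} (hr : r ∈ Ioo (0 : ℝ) 1) : r ^ 2 < 1 := by
  nlinarith [hr.1, hr.2]

theorem hasDerivAt_sqrt_one_sub_sq {r : ℝ} (hr : r ^ 2 < 1) :
    HasDerivAt (fun t => √(1 - t ^ 2)) (-r / √(1 - r ^ 2)) r := by
  have hpos : 0 < 1 - r ^ 2 := by linarith
  convert ((hasDerivAt_pow 2 r).const_sub 1).sqrt hpos.ne' using 1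
  field_simp
  ring

theorem integrableOn_and_integral_Ioo_div_sqrt_one_sub_sq :
    IntegrableOn (fun r => r / √(1 - r ^ 2)) (Ioo 0 1) ∧
      ∫ r in Ioo (0 : ℝ) 1, r / √(1 - r ^ 2) = 1 := by
  have hftc := integrableOn_Ioo_and_integral_eq_sub_of_hasDerivAt_of_nonneg
    (f := fun t => -√(1 - t ^ 2)) (f' := fun r => r / √(1 - r ^ 2)) zero_le_one (by fun_prop)
    (fun r hr => by
      simpa [neg_div] using (hasDerivAt_sqrt_one_sub_sq (sq_lt_one_of_mem_Ioo hr)).fun_neg)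
    (fun r hr => div_nonneg hr.1.le (sqrt_nonneg _))
  simpa using hftc

theorem integral_Ioo_pow_three_div_sqrt_one_sub_sq :
    ∫ r in Ioo (0 : ℝ) 1, r ^ 3 / √(1 - r ^ 2) = 2 / 3 := by
  have hftc := integrableOn_Ioo_and_integral_eq_sub_of_hasDerivAt_of_nonneg
    (f := fun t => -(2 + t ^ 2) * √(1 - t ^ 2) / 3) (f' := fun r => r ^ 3 / √(1 - r ^ 2))
    zero_le_one (by fun_prop)
    (fun r hr => by
      have hr2 := sq_lt_one_of_mem_Ioo hr
      have hs : √(1 - r ^ 2) ^ 2 = 1 - r ^ 2 := sq_sqrt (by linarith)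
      have hs0 : √(1 - r ^ 2) ≠ 0 := (sqrt_pos.2 (by linarith)).ne'
      have hq : HasDerivAt (fun t : ℝ => -(2 + t ^ 2)) (-(2 * r)) r := by
        simpa using ((hasDerivAt_pow 2 r).const_add 2).fun_neg
      refine ((hq.fun_mul (hasDerivAt_sqrt_one_sub_sq hr2)).div_const 3).congr_deriv ?_
      field_simp
      linear_combination (-2 * r) * hs)
    (fun r hr => div_nonneg (pow_nonneg hr.1.le 3) (sqrt_nonneg _))
  rw [hftc.2]
  norm_num

theorem integrableOn_pow_div_sqrt_one_sub_sq {n : ℕ} (hn : n ≠ 0) :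
    IntegrableOn (fun r => r ^ n / √(1 - r ^ 2)) (Ioo 0 1) := by
  refine integrableOn_and_integral_Ioo_div_sqrt_one_sub_sq.1.mono' ?_ ?_
  · exact (ContinuousOn.div (by fun_prop) (by fun_prop) fun r hr =>
      (sqrt_pos.2 (by linarith [sq_lt_one_of_mem_Ioo hr])).ne').aestronglyMeasurable
        measurableSet_Ioo
  · filter_upwards [ae_restrict_mem measurableSet_Ioo] with r hr
    rw [norm_of_nonneg (by have := hr.1; positivity)]
    gcongr
    exact pow_le_of_le_one hr.1.le hr.2.le hn

theorem integral_quadratic_cos_sin (c₁₁ c₁₂ c₂₂ : ℝ) :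
    ∫ θ in (-π)..π, (c₁₁ * cos θ ^ 2 + c₁₂ * (sin θ * cos θ) + c₂₂ * sin θ ^ 2) =
      π * (c₁₁ + c₂₂) := by
  rw [intervalIntegral.integral_add (Continuous.intervalIntegrable (by fun_prop) _ _)
      (Continuous.intervalIntegrable (by fun_prop) _ _),
    intervalIntegral.integral_add (Continuous.intervalIntegrable (by fun_prop) _ _)
      (Continuous.intervalIntegrable (by fun_prop) _ _)]
  simp [integral_cos_sq, integral_sin_sq, integral_sin_mul_cos₁]
  ring

theorem measurableSet_unitDisk : MeasurableSet {z : ℝ × ℝ | z.1 ^ 2 + z.2 ^ 2 < 1} :=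
  measurableSet_lt (by fun_prop) measurable_const

theorem polarCoord_target_inter_preimage_unitDisk :
    polarCoord.target ∩ polarCoord.symm ⁻¹' {z : ℝ × ℝ | z.1 ^ 2 + z.2 ^ 2 < 1} =
      Ioo 0 1 ×ˢ Ioo (-π) π := by
  ext ⟨r, θ⟩
  have hr : (r * cos θ) ^ 2 + (r * sin θ) ^ 2 = r ^ 2 := by
    linear_combination r ^ 2 * sin_sq_add_cos_sq θ
  simp only [polarCoord_target, mem_inter_iff, mem_prod, mem_preimage, polarCoord_symm_apply,
    mem_ofPred_eq, hr, mem_Ioi, mem_Ioo]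
  constructor
  · rintro ⟨⟨h0, hθ⟩, h1⟩
    exact ⟨⟨h0, by nlinarith⟩, hθ⟩
  · rintro ⟨⟨h0, h1⟩, hθ⟩
    exact ⟨⟨h0, hθ⟩, by nlinarith⟩

theorem setIntegral_unitDisk_eq_polar (G : ℝ × ℝ → ℝ) :
    ∫ z in {z : ℝ × ℝ | z.1 ^ 2 + z.2 ^ 2 < 1}, G z =
      ∫ p in Ioo 0 1 ×ˢ Ioo (-π) π, p.1 * G (p.1 * cos p.2, p.1 * sin p.2) := by
  rw [← integral_indicator measurableSet_unitDisk, ← integral_comp_polarCoord_symm,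
    ← polarCoord_target_inter_preimage_unitDisk, ← setIntegral_indicator
      (measurableSet_unitDisk.preimage (by fun_prop))]
  congr 1 with p
  classical
  rw [indicator_apply, indicator_apply, mem_preimage]
  split_ifs <;> simp [polarCoord_symm_apply]

def quadraticPoly (a b₁ b₂ c₁₁ c₁₂ c₂₂ : ℝ) (x : ℝ × ℝ) : ℝ :=
  a + b₁ * x.1 + b₂ * x.2 + c₁₁ * x.1 ^ 2 + c₁₂ * (x.1 * x.2) + c₂₂ * x.2 ^ 2

theorem setIntegral_unitDisk_quadraticPoly_div_sqrt (a b₁ b₂ c₁₁ c₁₂ c₂₂ : ℝ) :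
    ∫ z in {z : ℝ × ℝ | z.1 ^ 2 + z.2 ^ 2 < 1},
      quadraticPoly a b₁ b₂ c₁₁ c₁₂ c₂₂ z / √(1 - (z.1 ^ 2 + z.2 ^ 2)) =
        2 * π * a + 2 * π / 3 * (c₁₁ + c₂₂) := by
  let radial : Fin 3 → ℝ → ℝ := fun i r => r ^ (i.val + 1) / √(1 - r ^ 2)
  let angular : Fin 3 → ℝ → ℝ := ![fun _ => a, fun θ => b₁ * cos θ + b₂ * sin θ,
    fun θ => c₁₁ * cos θ ^ 2 + c₁₂ * (sin θ * cos θ) + c₂₂ * sin θ ^ 2]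
  have hsplit : ∀ r θ : ℝ, r * (quadraticPoly a b₁ b₂ c₁₁ c₁₂ c₂₂ (r * cos θ, r * sin θ) /
      √(1 - ((r * cos θ) ^ 2 + (r * sin θ) ^ 2))) = ∑ i, radial i r * angular i θ := by
    intro r θ
    have hr : (r * cos θ) ^ 2 + (r * sin θ) ^ 2 = r ^ 2 := by
      linear_combination r ^ 2 * sin_sq_add_cos_sq θ
    simp only [quadraticPoly, hr, Fin.sum_univ_three, radial, angular, Matrix.cons_val,
      Fin.val_zero, Fin.val_one, Fin.val_two]
    ring
  simp_rw [setIntegral_unitDisk_eq_polar, hsplit, Measure.volume_eq_prod, ← Measure.prod_restrict]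
  rw [integral_sum_mul_prod _ _ _
    (fun i _ => integrableOn_pow_div_sqrt_one_sub_sq (Nat.succ_ne_zero _)) (fun i _ => ?_)]
  · simp [Fin.sum_univ_three, angular, setIntegral_Ioo_eq_intervalIntegral (neg_le_self pi_nonneg),
      integral_quadratic_cos_sin, integrableOn_and_integral_Ioo_div_sqrt_one_sub_sq.2,
      integral_Ioo_pow_three_div_sqrt_one_sub_sq]
    ring
  · fin_cases i <;>
      exact (Continuous.integrableOn_Icc (by simp [angular]; fun_prop)).mono_set Ioo_subset_Icc_self

theorem hasFDerivAt_quadraticPoly (a b₁ b₂ c₁₁ c₁₂ c₂₂ : ℝ) (p : ℝ × ℝ) :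
    HasFDerivAt (quadraticPoly a b₁ b₂ c₁₁ c₁₂ c₂₂)
      ((b₁ + 2 * c₁₁ * p.1 + c₁₂ * p.2) • ContinuousLinearMap.fst ℝ ℝ ℝ +
        (b₂ + c₁₂ * p.1 + 2 * c₂₂ * p.2) • ContinuousLinearMap.snd ℝ ℝ ℝ) p := by
  have h₁ : HasFDerivAt (fun x : ℝ × ℝ => x.1) (ContinuousLinearMap.fst ℝ ℝ ℝ) p := hasFDerivAt_fst
  have h₂ : HasFDerivAt (fun x : ℝ × ℝ => x.2) (ContinuousLinearMap.snd ℝ ℝ ℝ) p := hasFDerivAt_snd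
  refine (((((((h₁.const_mul b₁).const_add a).add (h₂.const_mul b₂)).add
    ((h₁.pow 2).const_mul c₁₁)).add ((h₁.mul h₂).const_mul c₁₂)).add
    ((h₂.pow 2).const_mul c₂₂))).congr_fderiv ?_
  ext <;> simp <;> ring

theorem Aop_quadraticPoly (c τ a b₁ b₂ c₁₁ c₁₂ c₂₂ : ℝ) :
    Aop c τ (0, 0) (quadraticPoly a b₁ b₂ c₁₁ c₁₂ c₂₂) = a + (c * τ) ^ 2 * (c₁₁ + c₂₂) := by
  have heuler : ∀ s : ℝ, ∀ z : ℝ × ℝ,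
      quadraticPoly a b₁ b₂ c₁₁ c₁₂ c₂₂ (s * z.1, s * z.2) +
          s * fderiv ℝ (quadraticPoly a b₁ b₂ c₁₁ c₁₂ c₂₂) (s * z.1, s * z.2) z =
        quadraticPoly a (2 * s * b₁) (2 * s * b₂) (3 * s ^ 2 * c₁₁) (3 * s ^ 2 * c₁₂)
          (3 * s ^ 2 * c₂₂) z := by
    intro s z
    simp [(hasFDerivAt_quadraticPoly _ _ _ _ _ _ _).fderiv, quadraticPoly]
    ring
  simp only [Aop, zero_add, heuler, setIntegral_unitDisk_quadraticPoly_div_sqrt]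
  field_simp

theorem Aop_phi5_general (c τ h : ℝ) :
    Aop c τ (0, 0) (phi5 h (0, 0)) = 1 - 2 * (c * τ / h) ^ 2 ∧
    Aop c τ (0, 0) (phi5 h (-1, -1)) = 0 ∧
    Aop c τ (0, 0) (phi5 h (1, 0)) = (c * τ / h) ^ 2 / 2 ∧
    Aop c τ (0, 0) (phi5 h (-1, 0)) = (c * τ / h) ^ 2 / 2 ∧
    Aop c τ (0, 0) (phi5 h (0, 1)) = (c * τ / h) ^ 2 / 2 ∧
    Aop c τ (0, 0) (phi5 h (0, -1)) = (c * τ / h) ^ 2 / 2 := by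
  have hcenter : phi5 h (0, 0) = quadraticPoly 1 0 0 (-1 / h ^ 2) (1 / h ^ 2) (-1 / h ^ 2) := by
    ext x; simp [phi5, quadraticPoly]; ring
  have hsouthwest : phi5 h (-1, -1) = quadraticPoly 0 0 0 0 (1 / h ^ 2) 0 := by
    ext x; simp [phi5, quadraticPoly]; ring
  have heast : phi5 h (1, 0) = quadraticPoly 0 (1 / (2 * h)) 0 (1 / (2 * h ^ 2)) 0 0 := by
    ext x; simp [phi5, quadraticPoly]; ring
  have hwest : phi5 h (-1, 0) =
      quadraticPoly 0 (-1 / (2 * h)) 0 (1 / (2 * h ^ 2)) (-1 / h ^ 2) 0 := by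
    ext x; simp [phi5, quadraticPoly]; ring
  have hnorth : phi5 h (0, 1) = quadraticPoly 0 0 (1 / (2 * h)) 0 0 (1 / (2 * h ^ 2)) := by
    ext x; simp [phi5, quadraticPoly]; ring
  have hsouth : phi5 h (0, -1) =
      quadraticPoly 0 0 (-1 / (2 * h)) 0 (-1 / h ^ 2) (1 / (2 * h ^ 2)) := by
    ext x; simp [phi5, quadraticPoly]; ring
  simp only [hcenter, hsouthwest, heast, hwest, hnorth, hsouth, Aop_quadraticPoly]
  refine ⟨by ring, by ring, by ring, by ring, by ring, by ring⟩

/-- Values of A on the Lagrange basis of the five/six-point stencil, λ = cτ/h. -/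
theorem Aop_phi5 (c τ h : ℝ) (hc : 0 < c) (hτ : 0 < τ) (hh : 0 < h) :
    Aop c τ (0, 0) (phi5 h (0, 0)) = 1 - 2 * (c * τ / h) ^ 2 ∧
    Aop c τ (0, 0) (phi5 h (-1, -1)) = 0 ∧
    Aop c τ (0, 0) (phi5 h (1, 0)) = (c * τ / h) ^ 2 / 2 ∧
    Aop c τ (0, 0) (phi5 h (-1, 0)) = (c * τ / h) ^ 2 / 2 ∧
    Aop c τ (0, 0) (phi5 h (0, 1)) = (c * τ / h) ^ 2 / 2 ∧
    Aop c τ (0, 0) (phi5 h (0, -1)) = (c * τ / h) ^ 2 / 2 :=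
  Aop_phi5_general c τ h
end

section
/- For the 11-point interpolation stencil with monomials {1, x₁, x₂, x₁x₂, x₁², x₂², x₁²x₂, x₁x₂², x₁³, x₂³, x₁²x₂²}, the even parts of the Lagrange basis functions at nodes (-2h, 0) and (0, -2h) vanish: all monomial terms of φ₋₂,₀ and φ₀,₋₂ with both exponents even are zero. -/
/-- Exponents of the 11 monomials {1,x₁,x₂,x₁x₂,x₁²,x₂²,x₁²x₂,x₁x₂²,x₁³,x₂³,x₁²x₂²}. -/
def exps11 : Fin 11 → ℕ × ℕ :=
  ![(0,0), (1,0), (0,1), (1,1), (2,0), (0,2), (2,1), (1,2), (3,0), (0,3), (2,2)]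

/-- The 11 interpolation stencil indices. -/
def nodes11 : Fin 11 → ℤ × ℤ :=
  ![(0,0), (-1,0), (0,-1), (-1,-1), (1,0), (0,1), (1,-1), (-1,1), (1,1), (-2,0), (0,-2)]

lemma sum11 (f : Fin 11 → ℝ) : ∑ s : Fin 11, f s
    = f 0 + (f 1 + (f 2 + (f 3 + (f 4 + (f 5 + (f 6 + (f 7 + (f 8 + (f 9 + f 10))))))))) := by
  simp [Fin.sum_univ_succ]

/-- For the 11-point interpolation stencil, the Lagrange basis functions at the
nodes (-2h,0) and (0,-2h) have vanishing even parts: every monomial coefficient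
with both exponents even is zero. -/
theorem even_part_vanishes_at_outer_nodes (h : ℝ) (hh : h ≠ 0)
    (t : Fin 11) (ht : nodes11 t = (-2, 0) ∨ nodes11 t = (0, -2))
    (c : Fin 11 → ℝ)
    (hinterp : ∀ r : Fin 11,
      (∑ s : Fin 11, c s * (((nodes11 r).1 : ℝ) * h) ^ (exps11 s).1 *
          (((nodes11 r).2 : ℝ) * h) ^ (exps11 s).2) = if r = t then 1 else 0) :
    ∀ s : Fin 11, Even (exps11 s).1 → Even (exps11 s).2 → c s = 0 := by
  have E : ∀ r : Fin 11, r.val < 9 →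
      (∑ s : Fin 11, c s * (((nodes11 r).1 : ℝ) * h) ^ (exps11 s).1 *
          (((nodes11 r).2 : ℝ) * h) ^ (exps11 s).2) = 0 := by
    intro r hr
    rw [hinterp r, if_neg]
    intro hrt
    rw [← hrt] at ht
    clear hinterp hrt
    rcases ht with ht | ht <;> fin_cases r <;>
      first
      | exact absurd hr (by decide)
      | exact absurd ht (by decide)
  have e0 := E 0 (by decide)
  have e1 := E 1 (by decide)
  have e2 := E 2 (by decide)
  have e3 := E 3 (by decide)
  have e4 := E 4 (by decide)
  have e5 := E 5 (by decide)
  have e6 := E 6 (by decide)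
  have e7 := E 7 (by decide)
  have e8 := E 8 (by decide)
  clear E hinterp
  simp only [sum11,
    show nodes11 0 = ((0,0) : ℤ × ℤ) from rfl,
    show nodes11 1 = ((-1,0) : ℤ × ℤ) from rfl,
    show nodes11 2 = ((0,-1) : ℤ × ℤ) from rfl,
    show nodes11 3 = ((-1,-1) : ℤ × ℤ) from rfl,
    show nodes11 4 = ((1,0) : ℤ × ℤ) from rfl,
    show nodes11 5 = ((0,1) : ℤ × ℤ) from rfl,
    show nodes11 6 = ((1,-1) : ℤ × ℤ) from rfl,
    show nodes11 7 = ((-1,1) : ℤ × ℤ) from rfl,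
    show nodes11 8 = ((1,1) : ℤ × ℤ) from rfl,
    show exps11 0 = ((0,0) : ℕ × ℕ) from rfl,
    show exps11 1 = ((1,0) : ℕ × ℕ) from rfl,
    show exps11 2 = ((0,1) : ℕ × ℕ) from rfl,
    show exps11 3 = ((1,1) : ℕ × ℕ) from rfl,
    show exps11 4 = ((2,0) : ℕ × ℕ) from rfl,
    show exps11 5 = ((0,2) : ℕ × ℕ) from rfl,
    show exps11 6 = ((2,1) : ℕ × ℕ) from rfl,
    show exps11 7 = ((1,2) : ℕ × ℕ) from rfl,
    show exps11 8 = ((3,0) : ℕ × ℕ) from rfl,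
    show exps11 9 = ((0,3) : ℕ × ℕ) from rfl,
    show exps11 10 = ((2,2) : ℕ × ℕ) from rfl] at e0 e1 e2 e3 e4 e5 e6 e7 e8
  push_cast at e0 e1 e2 e3 e4 e5 e6 e7 e8
  norm_num at e0 e1 e2 e3 e4 e5 e6 e7 e8
  have h2 : h ^ 2 ≠ 0 := pow_ne_zero _ hh
  have h4 : h ^ 4 ≠ 0 := pow_ne_zero _ hh
  have hc0 : c 0 = 0 := by linarith [e0]
  have t4 : c 4 * h ^ 2 = 0 := by linear_combination (e1 + e4) / 2 - e0
  have t5 : c 5 * h ^ 2 = 0 := by linear_combination (e2 + e5) / 2 - e0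
  have t10 : c 10 * h ^ 4 = 0 := by
    linear_combination (e3 + e6 + e7 + e8) / 4 - e0 - t4 - t5
  have hc4 : c 4 = 0 := (mul_eq_zero.mp t4).resolve_right h2
  have hc5 : c 5 = 0 := (mul_eq_zero.mp t5).resolve_right h2
  have hc10 : c 10 = 0 := (mul_eq_zero.mp t10).resolve_right h4
  intro s hs1 hs2
  fin_cases s <;>
    first
    | exact hc0
    | exact hc4
    | exact hc5
    | exact hc10
    | exact absurd hs1 (by decide)
    | exact absurd hs2 (by decide)
end
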